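/- Let {X_i : i ≥ 1} be i.i.d. integrable real random variables and let {N_n : n ≥ 1} be positive-integer-valued random variables such that the sequence (N_n) is independent of {X_i : i ≥ 1} and N_n/n → c in probability for a constant c ∈ (0,1]. Then (1/n)∑_{i=1}^{N_n} X_i → c·E[X_1] in probability and (1/N_n)∑_{i=1}^{N_n} X_i → E[X_1] in probability as n → ∞. -/

import Mathlib

open MeasureTheory ProbabilityTheory Filter Topology

noncomputable section

/-! If `S k / k → μ` almost surely and `N n / n → c > 0` in probability, then every subsequence
has a further subsequence along which `N n / n → c`, hence `N n → ∞`, almost surely. Along it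
`S (N n) / N n → μ` and `S (N n) / n = (S (N n) / N n) (N n / n) → c μ` pointwise a.s., and
convergence in measure follows from the subsequence criterion. With `S k = X 0 + ⋯ + X (k-1)`,
the almost sure hypothesis is the strong law of large numbers. -/

theorem Measurable.comp_index {Ω β : Type*} [MeasurableSpace Ω] [MeasurableSpace β]
    {f : ℕ → Ω → β} (hf : ∀ k, Measurable (f k)) {N : Ω → ℕ} (hN : Measurable N) :
    Measurable fun ω => f (N ω) ω :=
  (measurable_from_prod_countable_left (f := fun p => f p.2 p.1) hf).comp
    (measurable_id.prodMk hN)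

section Deterministic

variable {ι : Type*} {l : Filter ι} {m n : ι → ℕ} {c : ℝ}

theorem tendsto_atTop_of_tendsto_ratio (hc : 0 < c) (hn : Tendsto n l atTop)
    (hmn : Tendsto (fun j => (m j : ℝ) / n j) l (𝓝 c)) : Tendsto m l atTop := by
  have hn' : Tendsto (fun j => (n j : ℝ)) l atTop := tendsto_natCast_atTop_iff.mpr hn
  refine tendsto_natCast_atTop_iff.mp ((hmn.pos_mul_atTop hc hn').congr' ?_)
  filter_upwards [hn'.eventually_gt_atTop 0] with j hj
  exact div_mul_cancel₀ _ hj.ne'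

theorem tendsto_comp_div_of_tendsto_ratio {S : ℕ → ℝ} {μ : ℝ}
    (hS : Tendsto (fun k => S k / k) atTop (𝓝 μ)) (hm : Tendsto m l atTop)
    (hmn : Tendsto (fun j => (m j : ℝ) / n j) l (𝓝 c)) :
    Tendsto (fun j => S (m j) / n j) l (𝓝 (c * μ)) := by
  rw [mul_comm]
  refine ((hS.comp hm).mul hmn).congr' ?_
  filter_upwards [hm.eventually_gt_atTop 0] with j hj
  exact div_mul_div_cancel₀ (Nat.cast_ne_zero.mpr hj.ne')

end Deterministic

section RandomIndex

variable {Ω : Type*} [MeasurableSpace Ω] {P : Measure Ω} {S : ℕ → Ω → ℝ} {N : ℕ → Ω → ℕ}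
  {μ c : ℝ}

theorem exists_subseq_ae_tendsto_randomIndex (hc : 0 < c)
    (hN : TendstoInMeasure P (fun n ω => (N n ω : ℝ) / n) atTop (fun _ => c))
    {ns : ℕ → ℕ} (hns : StrictMono ns) :
    ∃ ns' : ℕ → ℕ, StrictMono ns' ∧ ∀ᵐ ω ∂P,
      Tendsto (fun j => N (ns (ns' j)) ω) atTop atTop ∧
      Tendsto (fun j => (N (ns (ns' j)) ω : ℝ) / ns (ns' j)) atTop (𝓝 c) := by
  obtain ⟨ns', hns', hae⟩ := (hN.comp hns.tendsto_atTop).exists_seq_tendsto_ae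
  refine ⟨ns', hns', ?_⟩
  filter_upwards [hae] with ω hω
  exact ⟨tendsto_atTop_of_tendsto_ratio hc (hns.comp hns').tendsto_atTop hω, hω⟩

variable [IsFiniteMeasure P]

theorem tendstoInMeasure_randomIndex_div_index (hS : ∀ k, Measurable (S k))
    (hNm : ∀ n, Measurable (N n)) (hSμ : ∀ᵐ ω ∂P, Tendsto (fun k => S k ω / k) atTop (𝓝 μ))
    (hc : 0 < c) (hN : TendstoInMeasure P (fun n ω => (N n ω : ℝ) / n) atTop (fun _ => c)) :
    TendstoInMeasure P (fun n ω => S (N n ω) ω / n) atTop (fun _ => c * μ) := by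
  rw [exists_seq_tendstoInMeasure_atTop_iff
    fun n => ((Measurable.comp_index hS (hNm n)).div_const _).aestronglyMeasurable]
  intro ns hns
  obtain ⟨ns', hns', hae⟩ := exists_subseq_ae_tendsto_randomIndex hc hN hns
  refine ⟨ns', hns', ?_⟩
  filter_upwards [hSμ, hae] with ω hω hNω
  exact tendsto_comp_div_of_tendsto_ratio hω hNω.1 hNω.2

theorem tendstoInMeasure_randomIndex_div_self (hS : ∀ k, Measurable (S k))
    (hNm : ∀ n, Measurable (N n)) (hSμ : ∀ᵐ ω ∂P, Tendsto (fun k => S k ω / k) atTop (𝓝 μ))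
    (hc : 0 < c) (hN : TendstoInMeasure P (fun n ω => (N n ω : ℝ) / n) atTop (fun _ => c)) :
    TendstoInMeasure P (fun n ω => S (N n ω) ω / N n ω) atTop (fun _ => μ) := by
  rw [exists_seq_tendstoInMeasure_atTop_iff fun n =>
    (Measurable.comp_index (fun k => (hS k).div_const k) (hNm n)).aestronglyMeasurable]
  intro ns hns
  obtain ⟨ns', hns', hae⟩ := exists_subseq_ae_tendsto_randomIndex hc hN hns
  refine ⟨ns', hns', ?_⟩
  filter_upwards [hSμ, hae] with ω hω hNω
  exact hω.comp hNω.1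

end RandomIndex

theorem lln_random_index_general
    {Ω : Type} [MeasurableSpace Ω] (P : Measure Ω) [IsProbabilityMeasure P]
    (X : ℕ → Ω → ℝ) (hmeas : ∀ i, Measurable (X i))
    (hident : ∀ i, ProbabilityTheory.IdentDistrib (X i) (X 0) P P)
    (hindep : ProbabilityTheory.iIndepFun X P)
    (hint : Integrable (X 0) P)
    (N : ℕ → Ω → ℕ) (hmeasN : ∀ n, Measurable (N n))
    (c : ℝ) (hc : c ∈ Set.Ioc (0 : ℝ) 1)
    (hN : TendstoInMeasure P (fun n ω => (N n ω : ℝ) / n) atTop (fun _ => c)) :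
    TendstoInMeasure P
        (fun n ω => (∑ i ∈ Finset.range (N n ω), X i ω) / n) atTop
        (fun _ => c * ∫ ω, X 0 ω ∂P) ∧
      TendstoInMeasure P
        (fun n ω => (∑ i ∈ Finset.range (N n ω), X i ω) / (N n ω)) atTop
        (fun _ => ∫ ω, X 0 ω ∂P) := by
  set S : ℕ → Ω → ℝ := fun k ω => ∑ i ∈ Finset.range k, X i ω
  have hS : ∀ k, Measurable (S k) := fun k => Finset.measurable_sum _ fun i _ => hmeas i
  have hslln : ∀ᵐ ω ∂P, Tendsto (fun k => S k ω / k) atTop (𝓝 (∫ ω, X 0 ω ∂P)) :=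
    strong_law_ae_real X hint (fun i j hij => hindep.indepFun hij) hident
  exact ⟨tendstoInMeasure_randomIndex_div_index (S := S) hS hmeasN hslln hc.1 hN,
    tendstoInMeasure_randomIndex_div_self (S := S) hS hmeasN hslln hc.1 hN⟩

/-- **Lemma (law of large numbers with a random number of terms).**
If `{X_i}` are i.i.d. integrable, `{N_n}` are positive-integer-valued random
variables with `(N_n)` independent of `{X_i}` and `N_n/n → c ∈ (0,1]` in
probability, then `(1/n)∑_{i=1}^{N_n} X_i →p c·E[X_1]` and
`(1/N_n)∑_{i=1}^{N_n} X_i →p E[X_1]`. -/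
theorem lln_random_index
    {Ω : Type} [MeasurableSpace Ω] (P : Measure Ω) [IsProbabilityMeasure P]
    (X : ℕ → Ω → ℝ) (hmeas : ∀ i, Measurable (X i))
    (hident : ∀ i, ProbabilityTheory.IdentDistrib (X i) (X 0) P P)
    (hindep : ProbabilityTheory.iIndepFun X P)
    (hint : Integrable (X 0) P)
    (N : ℕ → Ω → ℕ) (hmeasN : ∀ n, Measurable (N n)) (hNpos : ∀ n ω, 0 < N n ω)
    (hNX : ProbabilityTheory.IndepFun
      (fun ω => fun n : ℕ => N n ω) (fun ω => fun i : ℕ => X i ω) P)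
    (c : ℝ) (hc : c ∈ Set.Ioc (0 : ℝ) 1)
    (hN : TendstoInMeasure P (fun n ω => (N n ω : ℝ) / n) atTop (fun _ => c)) :
    TendstoInMeasure P
        (fun n ω => (∑ i ∈ Finset.range (N n ω), X i ω) / n) atTop
        (fun _ => c * ∫ ω, X 0 ω ∂P) ∧
      TendstoInMeasure P
        (fun n ω => (∑ i ∈ Finset.range (N n ω), X i ω) / (N n ω)) atTop
        (fun _ => ∫ ω, X 0 ω ∂P) :=
  lln_random_index_general P X hmeas hident hindep hint N hmeasN c hc hN
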